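/- Correct selection at every GARD step in the outlier-only case: let Q ∈ ℝ^{n×m} have orthonormal columns (QᵀQ = Iₘ), let u₀ ∈ ℝⁿ be s-sparse with support S, and let δ ∈ [0,1] satisfy the principal-angle bound for sparsity level s with δ² < min{|u₀ᵢ| : i ∈ S} / (2 ‖u₀‖₂). Then for every nonempty S_k ⊊ S, the matrix M_k = I_k − I_{S_k}ᵀQQᵀI_{S_k} is invertible and the residual r = v_k − QQᵀ v_k, where v_k = F_{S∖S_k}(u₀) + I_{S_k} M_k⁻¹ I_{S_k}ᵀ Q Qᵀ F_{S∖S_k}(u₀), satisfies |rᵢ| > |rⱼ| for every i ∈ S∖S_k and every j ∈ Sᶜ; hence the next selected index again belongs to the true outlier support S. -/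

import Mathlib

open Matrix

/-- Euclidean (ℓ₂) norm of a finitely-indexed real vector. -/
noncomputable def norm2 {ι : Type*} [Fintype ι] (v : ι → ℝ) : ℝ :=
  Real.sqrt (∑ i, v i ^ 2)

/-- A vector of `ℝⁿ` is `s`-sparse if it has at most `s` nonzero entries. -/
def Sparse {n : ℕ} (s : ℕ) (v : Fin n → ℝ) : Prop :=
  ∃ T : Finset (Fin n), T.card ≤ s ∧ ∀ i ∉ T, v i = 0

/-- `δ` satisfies the principal-angle bound for `Q` at sparsity level `s`:
`|⟨Qw, v⟩| ≤ δ ‖Qw‖₂ ‖v‖₂` for every `w` and every `s`-sparse `v`. -/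
def PABound {n m : ℕ} (Q : Matrix (Fin n) (Fin m) ℝ) (s : ℕ) (δ : ℝ) : Prop :=
  ∀ (w : Fin m → ℝ) (v : Fin n → ℝ), Sparse s v →
    |Q.mulVec w ⬝ᵥ v| ≤ δ * norm2 (Q.mulVec w) * norm2 v

/-- The `n × |S|` matrix `I_S` whose columns are the standard basis vectors `e_j`, `j ∈ S`. -/
def colSel {n : ℕ} (S : Finset (Fin n)) : Matrix (Fin n) {i // i ∈ S} ℝ :=
  Matrix.of fun i j => if i = (j : Fin n) then 1 else 0

/-- `F_S(a) = I_S I_Sᵀ a`: the vector agreeing with `a` on `S` and zero elsewhere. -/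
def restrictVec {n : ℕ} (S : Finset (Fin n)) (a : Fin n → ℝ) : Fin n → ℝ :=
  fun i => if i ∈ S then a i else 0

/-!
The principal-angle bound gives `‖Qᵀv‖ ≤ δ‖v‖` and `|(QQᵀv)ₐ| ≤ δ²‖v‖` for `s`-sparse `v`, and
makes the compressed Gram matrix `I_{S_k}ᵀQQᵀI_{S_k}` a contraction of norm at most `δ² < 1/2`.
Hence `M_k` is invertible, and the least-squares correction
`c = M_k⁻¹ I_{S_k}ᵀQQᵀ F_{S∖S_k}(u₀)` has `(1 - δ²)‖c‖ ≤ δ²‖u₀‖`, so `‖c‖ < min_S |u₀|`.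
The iterate `v_k` agrees with `u₀` on `S ∖ S_k`, vanishes off `S`, and by Pythagoras satisfies
`‖v_k‖ ≤ ‖u₀‖`. The residual differs from `v_k` by entries of size at most `δ²‖u₀‖`, and the
recovery condition `2δ²‖u₀‖ < min_S |u₀|` separates its entries on `S ∖ S_k` from those off `S`.
-/

lemma le_of_sq_le_mul {t K : ℝ} (ht : 0 ≤ t) (hK : 0 ≤ K) (h : t ^ 2 ≤ K * t) : t ≤ K := by
  rcases ht.eq_or_lt with rfl | ht
  · exact hK
  · nlinarith

lemma two_mul_sq_mul_lt_of_sq_lt_div {δ μ N : ℝ} (hN : 0 ≤ N) (h : δ ^ 2 < μ / (2 * N)) :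
    2 * δ ^ 2 * N < μ := by
  rcases hN.eq_or_lt with rfl | hN
  · rw [mul_zero, div_zero] at h
    nlinarith
  · rw [lt_div_iff₀ (by positivity)] at h
    linarith

section Norm2

variable {ι : Type*} [Fintype ι]

lemma norm2_nonneg (v : ι → ℝ) : 0 ≤ norm2 v := Real.sqrt_nonneg _

lemma norm2_zero : norm2 (0 : ι → ℝ) = 0 := by simp [norm2]

lemma norm2_sq (v : ι → ℝ) : norm2 v ^ 2 = v ⬝ᵥ v := by
  rw [norm2, Real.sq_sqrt (by positivity)]
  simp only [dotProduct, sq]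

lemma abs_apply_le_norm2 (v : ι → ℝ) (i : ι) : |v i| ≤ norm2 v := by
  rw [← Real.sqrt_sq_eq_abs]
  exact Real.sqrt_le_sqrt <|
    Finset.single_le_sum (f := fun i => v i ^ 2) (fun i _ => sq_nonneg _) (Finset.mem_univ i)

lemma norm2_add_le (v w : ι → ℝ) : norm2 (v + w) ≤ norm2 v + norm2 w := by
  have hcs : v ⬝ᵥ w ≤ norm2 v * norm2 w := by
    have h := Finset.sum_mul_sq_le_sq_mul_sq Finset.univ v w
    rw [← Real.sqrt_le_sqrt_iff (by positivity), Real.sqrt_mul (by positivity)] at h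
    exact (le_abs_self _).trans (by simpa [Real.sqrt_sq_eq_abs, norm2, dotProduct] using h)
  refine (pow_le_pow_iff_left₀ (norm2_nonneg _) (add_nonneg (norm2_nonneg v) (norm2_nonneg w))
    two_ne_zero).1 ?_
  rw [norm2_sq, add_dotProduct, dotProduct_add, dotProduct_add, add_sq, ← norm2_sq, ← norm2_sq,
    dotProduct_comm w v]
  linarith

lemma norm2_add_sq_of_mul_eq_zero {v w : ι → ℝ} (h : ∀ i, v i * w i = 0) :
    norm2 (v + w) ^ 2 = norm2 v ^ 2 + norm2 w ^ 2 := by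
  have hvw : v ⬝ᵥ w = 0 := Finset.sum_eq_zero fun i _ => h i
  rw [norm2_sq, norm2_sq, norm2_sq, add_dotProduct, dotProduct_add, dotProduct_add,
    dotProduct_comm w v, hvw]
  ring

lemma norm2_mulVec_of_transpose_mul_self {κ : Type*} [Fintype κ] [DecidableEq κ]
    {A : Matrix ι κ ℝ} (hA : Aᵀ * A = 1) (x : κ → ℝ) : norm2 (A *ᵥ x) = norm2 x := by
  have h : (A *ᵥ x) ⬝ᵥ (A *ᵥ x) = x ⬝ᵥ x := by
    rw [dotProduct_mulVec, ← mulVec_transpose, mulVec_mulVec, hA, one_mulVec, dotProduct_comm]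
  rw [← pow_left_inj₀ (norm2_nonneg _) (norm2_nonneg _) two_ne_zero, norm2_sq, norm2_sq, h]

end Norm2

section colSel

variable {n : ℕ} (T : Finset (Fin n))

lemma colSel_transpose_mulVec_apply (a : Fin n → ℝ) (j : {i // i ∈ T}) :
    ((colSel T)ᵀ *ᵥ a) j = a j := by
  simp [mulVec, dotProduct, colSel, ite_mul]

lemma colSel_mulVec_apply (c : {i // i ∈ T} → ℝ) (i : Fin n) :
    (colSel T *ᵥ c) i = if h : i ∈ T then c ⟨i, h⟩ else 0 := by
  split_ifs with h
  · rw [mulVec, dotProduct, Finset.sum_eq_single ⟨i, h⟩] <;> simp [colSel, Subtype.ext_iff]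
    exact fun j _ hj e => absurd e.symm hj
  · refine Finset.sum_eq_zero fun j _ => ?_
    simp only [colSel, of_apply, ite_mul, one_mul, zero_mul, ite_eq_right_iff]
    rintro rfl; exact absurd j.2 h

lemma colSel_transpose_mul_self : (colSel T)ᵀ * colSel T = 1 := by
  ext j k
  rw [mul_apply, Finset.sum_eq_single (k : Fin n)]
  · simp only [transpose_apply, colSel, of_apply, if_pos, mul_one, one_apply, Subtype.ext_iff,
      eq_comm]
  · intro i _ hi
    simp [colSel, hi]
  · simp

lemma norm2_colSel_mulVec (c : {i // i ∈ T} → ℝ) : norm2 (colSel T *ᵥ c) = norm2 c :=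
  norm2_mulVec_of_transpose_mul_self (colSel_transpose_mul_self T) c

end colSel

lemma sparse_colSel_mulVec {n s : ℕ} {T : Finset (Fin n)} (hT : T.card ≤ s)
    (c : {i // i ∈ T} → ℝ) : Sparse s (colSel T *ᵥ c) :=
  ⟨T, hT, fun i hi => by rw [colSel_mulVec_apply, dif_neg hi]⟩

lemma sparse_restrictVec {n s : ℕ} {T : Finset (Fin n)} (hT : T.card ≤ s) (u : Fin n → ℝ) :
    Sparse s (restrictVec T u) :=
  ⟨T, hT, fun _ hi => if_neg hi⟩

section NearIdentity

variable {ι : Type*} [Fintype ι] [DecidableEq ι] {A : Matrix ι ι ℝ} {κ : ℝ}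

lemma one_sub_mul_norm2_le_norm2_one_sub_mulVec (hA : ∀ x, norm2 (A *ᵥ x) ≤ κ * norm2 x)
    (x : ι → ℝ) : (1 - κ) * norm2 x ≤ norm2 ((1 - A) *ᵥ x) := by
  have h := norm2_add_le (x - A *ᵥ x) (A *ᵥ x)
  rw [sub_add_cancel] at h
  rw [sub_mulVec, one_mulVec]
  linarith [hA x]

lemma isUnit_one_sub_of_norm2_mulVec_le (hA : ∀ x, norm2 (A *ᵥ x) ≤ κ * norm2 x) (hκ : κ < 1) :
    IsUnit (1 - A) := by
  rw [isUnit_iff_isUnit_det, isUnit_iff_ne_zero]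
  intro hdet
  obtain ⟨x, hx, hAx⟩ := exists_mulVec_eq_zero_iff.2 hdet
  obtain ⟨i, hi⟩ := Function.ne_iff.1 hx
  have hpos : 0 < (1 - κ) * norm2 x :=
    mul_pos (by linarith) ((abs_pos.2 hi).trans_le (abs_apply_le_norm2 x i))
  have h := one_sub_mul_norm2_le_norm2_one_sub_mulVec hA x
  rw [hAx, norm2_zero] at h
  linarith

lemma one_sub_mul_norm2_inv_mulVec_le (hA : ∀ x, norm2 (A *ᵥ x) ≤ κ * norm2 x) (hκ : κ < 1)
    (b : ι → ℝ) : (1 - κ) * norm2 ((1 - A)⁻¹ *ᵥ b) ≤ norm2 b := by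
  have hdet := (isUnit_iff_isUnit_det _).1 (isUnit_one_sub_of_norm2_mulVec_le hA hκ)
  have h := one_sub_mul_norm2_le_norm2_one_sub_mulVec hA ((1 - A)⁻¹ *ᵥ b)
  rwa [mulVec_mulVec, mul_nonsing_inv _ hdet, one_mulVec] at h

end NearIdentity

namespace PABound

variable {n m s : ℕ} {Q : Matrix (Fin n) (Fin m) ℝ} {δ : ℝ}

lemma norm2_transpose_mulVec_le (hPA : PABound Q s δ) (hQ : Qᵀ * Q = 1) (hδ : 0 ≤ δ)
    {v : Fin n → ℝ} (hv : Sparse s v) : norm2 (Qᵀ *ᵥ v) ≤ δ * norm2 v := by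
  have h := hPA (Qᵀ *ᵥ v) v hv
  rw [norm2_mulVec_of_transpose_mul_self hQ, dotProduct_comm, dotProduct_mulVec,
    ← mulVec_transpose, ← norm2_sq, abs_sq] at h
  exact le_of_sq_le_mul (norm2_nonneg _) (mul_nonneg hδ (norm2_nonneg v)) (by linarith)

lemma norm2_colSel_transpose_mulVec_le (hPA : PABound Q s δ) (hQ : Qᵀ * Q = 1) (hδ : 0 ≤ δ)
    {T : Finset (Fin n)} (hT : T.card ≤ s) (y : Fin m → ℝ) :
    norm2 ((colSel T)ᵀ *ᵥ (Q *ᵥ y)) ≤ δ * norm2 y := by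
  have h := hPA y _ (sparse_colSel_mulVec hT ((colSel T)ᵀ *ᵥ (Q *ᵥ y)))
  rw [dotProduct_mulVec, ← mulVec_transpose, ← norm2_sq, abs_sq, norm2_colSel_mulVec,
    norm2_mulVec_of_transpose_mul_self hQ] at h
  exact le_of_sq_le_mul (norm2_nonneg _) (mul_nonneg hδ (norm2_nonneg y)) h

lemma abs_mulVec_apply_le (hPA : PABound Q s δ) (hQ : Qᵀ * Q = 1) (hδ : 0 ≤ δ) (hs : 1 ≤ s)
    (y : Fin m → ℝ) (a : Fin n) : |(Q *ᵥ y) a| ≤ δ * norm2 y :=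
  calc |(Q *ᵥ y) a| = |((colSel {a})ᵀ *ᵥ (Q *ᵥ y)) ⟨a, Finset.mem_singleton_self a⟩| := by
        rw [colSel_transpose_mulVec_apply]
    _ ≤ norm2 ((colSel {a})ᵀ *ᵥ (Q *ᵥ y)) := abs_apply_le_norm2 _ _
    _ ≤ δ * norm2 y := hPA.norm2_colSel_transpose_mulVec_le hQ hδ (by simpa using hs) y

lemma abs_mulVec_transpose_mulVec_apply_le (hPA : PABound Q s δ) (hQ : Qᵀ * Q = 1)
    (hδ : 0 ≤ δ) (hs : 1 ≤ s) {v : Fin n → ℝ} (hv : Sparse s v) (a : Fin n) :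
    |(Q *ᵥ (Qᵀ *ᵥ v)) a| ≤ δ ^ 2 * norm2 v :=
  calc |(Q *ᵥ (Qᵀ *ᵥ v)) a| ≤ δ * norm2 (Qᵀ *ᵥ v) := hPA.abs_mulVec_apply_le hQ hδ hs _ a
    _ ≤ δ * (δ * norm2 v) :=
        mul_le_mul_of_nonneg_left (hPA.norm2_transpose_mulVec_le hQ hδ hv) hδ
    _ = δ ^ 2 * norm2 v := by ring

lemma norm2_compression_mulVec_le (hPA : PABound Q s δ) (hQ : Qᵀ * Q = 1) (hδ : 0 ≤ δ)
    {T : Finset (Fin n)} (hT : T.card ≤ s) (x : {i // i ∈ T} → ℝ) :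
    norm2 (((colSel T)ᵀ * Q * Qᵀ * colSel T) *ᵥ x) ≤ δ ^ 2 * norm2 x := by
  rw [← mulVec_mulVec, ← mulVec_mulVec, ← mulVec_mulVec]
  calc norm2 ((colSel T)ᵀ *ᵥ (Q *ᵥ (Qᵀ *ᵥ (colSel T *ᵥ x))))
      ≤ δ * norm2 (Qᵀ *ᵥ (colSel T *ᵥ x)) := hPA.norm2_colSel_transpose_mulVec_le hQ hδ hT _
    _ ≤ δ * (δ * norm2 (colSel T *ᵥ x)) := mul_le_mul_of_nonneg_left
        (hPA.norm2_transpose_mulVec_le hQ hδ (sparse_colSel_mulVec hT x)) hδ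
    _ = δ ^ 2 * norm2 x := by rw [norm2_colSel_mulVec]; ring

lemma one_sub_sq_mul_norm2_correction_le (hPA : PABound Q s δ) (hQ : Qᵀ * Q = 1) (hδ : 0 ≤ δ)
    (hδ1 : δ ^ 2 < 1) {K : Finset (Fin n)} (hK : K.card ≤ s) {e : Fin n → ℝ} (he : Sparse s e) :
    (1 - δ ^ 2) * norm2 ((1 - (colSel K)ᵀ * Q * Qᵀ * colSel K)⁻¹ *ᵥ
      ((colSel K)ᵀ *ᵥ (Q *ᵥ (Qᵀ *ᵥ e)))) ≤ δ ^ 2 * norm2 e :=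
  calc _ ≤ norm2 ((colSel K)ᵀ *ᵥ (Q *ᵥ (Qᵀ *ᵥ e))) :=
        one_sub_mul_norm2_inv_mulVec_le (hPA.norm2_compression_mulVec_le hQ hδ hK) hδ1 _
    _ ≤ δ * norm2 (Qᵀ *ᵥ e) := hPA.norm2_colSel_transpose_mulVec_le hQ hδ hK _
    _ ≤ δ * (δ * norm2 e) := mul_le_mul_of_nonneg_left (hPA.norm2_transpose_mulVec_le hQ hδ he) hδ
    _ = δ ^ 2 * norm2 e := by ring

lemma abs_sub_mulVec_transpose_mulVec_apply_lt (hPA : PABound Q s δ) (hQ : Qᵀ * Q = 1) (hδ : 0 ≤ δ)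
    (hs : 1 ≤ s) {v : Fin n → ℝ} (hv : Sparse s v) {i j : Fin n} (hj : v j = 0)
    (hi : 2 * δ ^ 2 * norm2 v < |v i|) :
    |(v - Q *ᵥ (Qᵀ *ᵥ v)) j| < |(v - Q *ᵥ (Qᵀ *ᵥ v)) i| := by
  have hPi := hPA.abs_mulVec_transpose_mulVec_apply_le hQ hδ hs hv i
  have hPj := hPA.abs_mulVec_transpose_mulVec_apply_le hQ hδ hs hv j
  have hri := abs_sub_abs_le_abs_sub (v i) ((Q *ᵥ (Qᵀ *ᵥ v)) i)
  rw [Pi.sub_apply, Pi.sub_apply, hj, zero_sub, abs_neg]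
  linarith

end PABound

section restrictVec

variable {n : ℕ}

lemma norm2_sq_eq_restrictVec_add (T : Finset (Fin n)) (u : Fin n → ℝ) :
    norm2 u ^ 2 = norm2 (restrictVec T u) ^ 2 + norm2 (u - restrictVec T u) ^ 2 := by
  rw [← norm2_add_sq_of_mul_eq_zero, add_sub_cancel]
  intro i
  by_cases hi : i ∈ T <;> simp [restrictVec, hi]

lemma norm2_restrictVec_le (T : Finset (Fin n)) (u : Fin n → ℝ) :
    norm2 (restrictVec T u) ≤ norm2 u := by
  refine (pow_le_pow_iff_left₀ (norm2_nonneg _) (norm2_nonneg _) two_ne_zero).1 ?_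
  rw [norm2_sq_eq_restrictVec_add T u]
  nlinarith

variable {T K : Finset (Fin n)} {u : Fin n → ℝ} {c : {i // i ∈ K} → ℝ} {i : Fin n}

lemma restrictVec_add_colSel_mulVec_apply_of_mem (hiT : i ∈ T) (hiK : i ∉ K) :
    (restrictVec T u + colSel K *ᵥ c) i = u i := by
  rw [Pi.add_apply, colSel_mulVec_apply, dif_neg hiK, restrictVec, if_pos hiT, add_zero]

lemma restrictVec_add_colSel_mulVec_apply_of_not_mem (hiT : i ∉ T) (hiK : i ∉ K) :
    (restrictVec T u + colSel K *ᵥ c) i = 0 := by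
  rw [Pi.add_apply, colSel_mulVec_apply, dif_neg hiK, restrictVec, if_neg hiT, add_zero]

lemma norm2_restrictVec_add_colSel_mulVec_le (hTK : Disjoint T K) {i₀ : Fin n} (hi₀ : i₀ ∈ K)
    (hc : norm2 c ≤ |u i₀|) : norm2 (restrictVec T u + colSel K *ᵥ c) ≤ norm2 u := by
  have hdisj : ∀ i, restrictVec T u i * (colSel K *ᵥ c) i = 0 := by
    intro i
    by_cases hi : i ∈ T
    · simp [colSel_mulVec_apply, Finset.disjoint_left.1 hTK hi]
    · simp [restrictVec, hi]
  have hrest : |u i₀| ≤ norm2 (u - restrictVec T u) := by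
    simpa [restrictVec, Finset.disjoint_right.1 hTK hi₀] using
      abs_apply_le_norm2 (u - restrictVec T u) i₀
  refine (pow_le_pow_iff_left₀ (norm2_nonneg _) (norm2_nonneg _) two_ne_zero).1 ?_
  rw [norm2_add_sq_of_mul_eq_zero hdisj, norm2_colSel_mulVec, norm2_sq_eq_restrictVec_add T u]
  nlinarith [pow_le_pow_left₀ (norm2_nonneg c) (hc.trans hrest) 2]

end restrictVec

theorem stmt13_general {n m s : ℕ} (Q : Matrix (Fin n) (Fin m) ℝ) (hQ : Qᵀ * Q = 1)
    (δ : ℝ) (hδ0 : 0 ≤ δ) (hPA : PABound Q s δ)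
    (u₀ : Fin n → ℝ) (S : Finset (Fin n))
    (hSne : S.Nonempty) (hcard : S.card ≤ s)
    (hbound : δ ^ 2 < S.inf' hSne (fun i => |u₀ i|) / (2 * norm2 u₀))
    (Sk : Finset (Fin n)) (hSkne : Sk.Nonempty) (hSkS : Sk ⊂ S)
    (Mk : Matrix {i // i ∈ Sk} {i // i ∈ Sk} ℝ)
    (hMk : Mk = 1 - (colSel Sk)ᵀ * Q * Qᵀ * colSel Sk)
    (vk : Fin n → ℝ)
    (hvk : vk = restrictVec (S \ Sk) u₀ +
      (colSel Sk).mulVec ((Mk⁻¹).mulVec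
        ((colSel Sk)ᵀ.mulVec (Q.mulVec (Qᵀ.mulVec (restrictVec (S \ Sk) u₀))))))
    (r : Fin n → ℝ) (hr : r = vk - Q.mulVec (Qᵀ.mulVec vk)) :
    IsUnit Mk ∧ ∀ i ∈ S \ Sk, ∀ j ∉ S, |r j| < |r i| := by
  obtain ⟨i₀, hi₀⟩ := hSkne
  have hs : 1 ≤ s := hSne.card_pos.trans_le hcard
  have hSk : Sk.card ≤ s := (Finset.card_le_card hSkS.subset).trans hcard
  have hμ : ∀ i ∈ S, S.inf' hSne (fun i => |u₀ i|) ≤ |u₀ i| := fun i hi => Finset.inf'_le _ hi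
  have hδμ := two_mul_sq_mul_lt_of_sq_lt_div (norm2_nonneg u₀) hbound
  have hδ : δ ^ 2 < 1 / 2 := by
    nlinarith [hμ i₀ (hSkS.subset hi₀), abs_apply_le_norm2 u₀ i₀, norm2_nonneg u₀]
  have hc := hPA.one_sub_sq_mul_norm2_correction_le hQ hδ0 (by linarith) hSk
    (sparse_restrictVec (T := S \ Sk) ((Finset.card_le_card Finset.sdiff_subset).trans hcard) u₀)
  rw [← hMk] at hc
  have hvk_norm : norm2 vk ≤ norm2 u₀ := by
    refine hvk ▸ norm2_restrictVec_add_colSel_mulVec_le Finset.sdiff_disjoint hi₀ ?_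
    nlinarith [hμ i₀ (hSkS.subset hi₀), norm2_restrictVec_le (S \ Sk) u₀, norm2_nonneg
      (Mk⁻¹ *ᵥ ((colSel Sk)ᵀ *ᵥ (Q *ᵥ (Qᵀ *ᵥ restrictVec (S \ Sk) u₀))))]
  have hvk_off : ∀ j ∉ S, vk j = 0 := fun j hj =>
    hvk ▸ restrictVec_add_colSel_mulVec_apply_of_not_mem (fun h => hj (Finset.mem_sdiff.1 h).1)
      (fun h => hj (hSkS.subset h))
  refine ⟨hMk ▸ isUnit_one_sub_of_norm2_mulVec_le (hPA.norm2_compression_mulVec_le hQ hδ0 hSk)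
    (by linarith), fun i hi j hj => hr ▸ ?_⟩
  have hvk_i : vk i = u₀ i :=
    hvk ▸ restrictVec_add_colSel_mulVec_apply_of_mem hi (Finset.mem_sdiff.1 hi).2
  refine hPA.abs_sub_mulVec_transpose_mulVec_apply_lt hQ hδ0 hs ⟨S, hcard, hvk_off⟩
    (hvk_off j hj) ?_
  rw [hvk_i]
  nlinarith [hμ i (Finset.mem_sdiff.1 hi).1, mul_le_mul_of_nonneg_left hvk_norm (sq_nonneg δ)]

/-- Correct selection at every GARD step in the outlier-only case: under the recovery
condition `δ² < min_{i ∈ S} |u₀ᵢ| / (2‖u₀‖₂)`, for every nonempty `S_k ⊊ S` the matrix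
`M_k` is invertible and the residual `r = v_k − QQᵀ v_k` satisfies `|rᵢ| > |rⱼ|` for every
`i ∈ S∖S_k` and `j ∈ Sᶜ`; hence the next selected index belongs to the outlier support. -/
theorem stmt13 {n m s : ℕ} (Q : Matrix (Fin n) (Fin m) ℝ) (hQ : Qᵀ * Q = 1)
    (δ : ℝ) (hδ0 : 0 ≤ δ) (hδ1 : δ ≤ 1) (hPA : PABound Q s δ)
    (u₀ : Fin n → ℝ) (S : Finset (Fin n)) (hsupp : ∀ i, i ∈ S ↔ u₀ i ≠ 0)
    (hSne : S.Nonempty) (hcard : S.card ≤ s)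
    (hbound : δ ^ 2 < S.inf' hSne (fun i => |u₀ i|) / (2 * norm2 u₀))
    (Sk : Finset (Fin n)) (hSkne : Sk.Nonempty) (hSkS : Sk ⊂ S)
    (Mk : Matrix {i // i ∈ Sk} {i // i ∈ Sk} ℝ)
    (hMk : Mk = 1 - (colSel Sk)ᵀ * Q * Qᵀ * colSel Sk)
    (vk : Fin n → ℝ)
    (hvk : vk = restrictVec (S \ Sk) u₀ +
      (colSel Sk).mulVec ((Mk⁻¹).mulVec
        ((colSel Sk)ᵀ.mulVec (Q.mulVec (Qᵀ.mulVec (restrictVec (S \ Sk) u₀))))))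
    (r : Fin n → ℝ) (hr : r = vk - Q.mulVec (Qᵀ.mulVec vk)) :
    IsUnit Mk ∧ ∀ i ∈ S \ Sk, ∀ j ∉ S, |r j| < |r i| :=
  stmt13_general Q hQ δ hδ0 hPA u₀ S hSne hcard hbound Sk hSkne hSkS Mk hMk vk hvk r hr
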